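/- Assume the Notation 3.2 setup. Let n ≥ 1 be a natural number with binary expansion n = 2^{i_1} + ⋯ + 2^{i_d} where i_1 < i_2 < ⋯ < i_d, and let m be such that 2^m ≤ n < 2^{m+1}. Define L(n) = {a ∈ A(n) : a·A(2^{m+1}−n) ⊆ U(2^{m+1})}. Then V(2^{i_d})V(2^{i_{d−1}})⋯V(2^{i_1}) + L(n) = A(n). -/

import Mathlib

open Module

noncomputable section

/-- The free associative algebra `K⟨x,y⟩` on two generators. -/
abbrev FA (K : Type*) [Field K] := FreeAlgebra K (Fin 2)

/-- The element of `K⟨x,y⟩` given by a word (a list of letters). -/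
def wordOf (K : Type*) [Field K] (l : List (Fin 2)) : FA K :=
  (l.map (FreeAlgebra.ι K)).prod

/-- `a` is a word of length `n` over the two generators. -/
def IsWord (K : Type*) [Field K] (n : ℕ) (a : FA K) : Prop :=
  ∃ l : List (Fin 2), l.length = n ∧ a = wordOf K l

/-- `A(n)`: the span of all words of length `n`. -/
def Aspan (K : Type*) [Field K] (n : ℕ) : Submodule K (FA K) :=
  Submodule.span K {a | IsWord K n a}

/-- The set `T = ∪_{i ≥ 1} {f(i)-g(i)-1, …, f(i)-1}`. -/
def Tset (f g : ℕ → ℕ) : Set ℕ :=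
  {n | ∃ i, 1 ≤ i ∧ f i ≤ n + g i + 1 ∧ n + 1 ≤ f i}

/-- The data and conditions of Notation 3.2 (with the subspaces `U(2^n)`, `V(2^n)`
satisfying conditions (1)–(8) of Proposition 3.1). Here `U n` and `V n` denote the
subspaces `U(2^n)` and `V(2^n)` of `A(2^n)`. -/
structure LSYSetup (K : Type*) [Field K] where
  f : ℕ → ℕ
  g : ℕ → ℕ
  W : ℕ → Submodule K (FA K)
  U : ℕ → Submodule K (FA K)
  V : ℕ → Submodule K (FA K)
  /-- `f(i-1) < f(i) - g(i) - 1` for all `i ≥ 1` -/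
  hf : ∀ i, 1 ≤ i → f (i - 1) + g i + 1 < f i
  /-- `W_i ⊆ A(2^{f(i)})` -/
  hW_le : ∀ i, 1 ≤ i → W i ≤ Aspan K (2 ^ f i)
  /-- `dim W_i ≤ 2^{2^{g(i)}} - 2` -/
  hW_dim : ∀ i, 1 ≤ i → finrank K (W i) ≤ 2 ^ 2 ^ g i - 2
  hU_le : ∀ n, U n ≤ Aspan K (2 ^ n)
  hV_le : ∀ n, V n ≤ Aspan K (2 ^ n)
  /-- (1) `U(2^n) ⊕ V(2^n) = A(2^n)` -/
  h_disj : ∀ n, Disjoint (U n) (V n)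
  h_sup : ∀ n, U n ⊔ V n = Aspan K (2 ^ n)
  /-- (2) `dim V(2^n) = 2` whenever `n ∉ T` -/
  h_dimV : ∀ n, n ∉ Tset f g → finrank K (V n) = 2
  /-- (3) `dim V(2^{n+j}) = 2^{2^j}` whenever `n = f(i)-g(i)-1` and `0 ≤ j ≤ g(i)` -/
  h_dimV' : ∀ i j n, 1 ≤ i → n + g i + 1 = f i → j ≤ g i →
      finrank K (V (n + j)) = 2 ^ 2 ^ j
  /-- (4) `V(2^n)` has a basis consisting of words -/
  h_basis : ∀ n, ∃ s : Set (FA K), (∀ w ∈ s, IsWord K (2 ^ n) w) ∧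
      LinearIndependent K ((↑) : s → FA K) ∧ Submodule.span K s = V n
  /-- (5) `W_i ⊆ U(2^{f(i)})` -/
  hWU : ∀ i, 1 ≤ i → W i ≤ U (f i)
  /-- (6) `A(2^n)U(2^n) + U(2^n)A(2^n) ⊆ U(2^{n+1})` -/
  hU_mul : ∀ n, Aspan K (2 ^ n) * U n ⊔ U n * Aspan K (2 ^ n) ≤ U (n + 1)
  /-- (7) `V(2^{n+1}) ⊆ V(2^n)V(2^n)` -/
  hV_mul : ∀ n, V (n + 1) ≤ V n * V n
  /-- (8) if `n ∉ T` then some word `w ∈ V(2^n)` has `w·A(2^n) ⊆ U(2^{n+1})` -/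
  h_word : ∀ n, n ∉ Tset f g → ∃ w, IsWord K (2 ^ n) w ∧ w ∈ V n ∧
      ∀ a ∈ Aspan K (2 ^ n), w * a ∈ U (n + 1)

variable {K : Type*} [Field K]

/-- `R(n) = {a ∈ A(n) : A(2^{m+1}-n)·a ⊆ U(2^{m+1})}`. -/
def Rspace (S : LSYSetup K) (n m : ℕ) : Submodule K (FA K) where
  carrier := {a | a ∈ Aspan K n ∧ ∀ b ∈ Aspan K (2 ^ (m + 1) - n), b * a ∈ S.U (m + 1)}
  add_mem' := by
    rintro a b ⟨ha1, ha2⟩ ⟨hb1, hb2⟩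
    exact ⟨add_mem ha1 hb1, fun c hc => by
      rw [mul_add]; exact add_mem (ha2 c hc) (hb2 c hc)⟩
  zero_mem' := ⟨zero_mem _, fun c hc => by rw [mul_zero]; exact zero_mem _⟩
  smul_mem' := by
    rintro k a ⟨ha1, ha2⟩
    exact ⟨Submodule.smul_mem _ k ha1, fun c hc => by
      rw [mul_smul_comm]; exact Submodule.smul_mem _ _ (ha2 c hc)⟩

/-- `L(n) = {a ∈ A(n) : a·A(2^{m+1}-n) ⊆ U(2^{m+1})}`. -/
def Lspace (S : LSYSetup K) (n m : ℕ) : Submodule K (FA K) where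
  carrier := {a | a ∈ Aspan K n ∧ ∀ b ∈ Aspan K (2 ^ (m + 1) - n), a * b ∈ S.U (m + 1)}
  add_mem' := by
    rintro a b ⟨ha1, ha2⟩ ⟨hb1, hb2⟩
    exact ⟨add_mem ha1 hb1, fun c hc => by
      rw [add_mul]; exact add_mem (ha2 c hc) (hb2 c hc)⟩
  zero_mem' := ⟨zero_mem _, fun c hc => by rw [zero_mul]; exact zero_mem _⟩
  smul_mem' := by
    rintro k a ⟨ha1, ha2⟩
    exact ⟨Submodule.smul_mem _ k ha1, fun c hc => by
      rw [smul_mul_assoc]; exact Submodule.smul_mem _ _ (ha2 c hc)⟩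

/-- `I(n) = {a ∈ A(n) : A(j)·a·A(2^{m+2}-j-n) ⊆ U(2^{m+1})A(2^{m+1}) + A(2^{m+1})U(2^{m+1})`
for all `0 ≤ j ≤ 2^{m+2}-n}`, where `2^m ≤ n < 2^{m+1}` (i.e. `m = Nat.log 2 n`). -/
def Ispace (S : LSYSetup K) (n : ℕ) : Submodule K (FA K) where
  carrier := {a | a ∈ Aspan K n ∧ ∀ j ≤ 2 ^ (Nat.log 2 n + 2) - n,
      ∀ b ∈ Aspan K j, ∀ c ∈ Aspan K (2 ^ (Nat.log 2 n + 2) - j - n),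
      b * a * c ∈ S.U (Nat.log 2 n + 1) * Aspan K (2 ^ (Nat.log 2 n + 1)) ⊔
        Aspan K (2 ^ (Nat.log 2 n + 1)) * S.U (Nat.log 2 n + 1)}
  add_mem' := by
    rintro a b ⟨ha1, ha2⟩ ⟨hb1, hb2⟩
    refine ⟨add_mem ha1 hb1, fun j hj c hc d hd => ?_⟩
    rw [mul_add, add_mul]
    exact add_mem (ha2 j hj c hc d hd) (hb2 j hj c hc d hd)
  zero_mem' := ⟨zero_mem _, fun j hj c hc d hd => by
    rw [mul_zero, zero_mul]; exact zero_mem _⟩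
  smul_mem' := by
    rintro k a ⟨ha1, ha2⟩
    refine ⟨Submodule.smul_mem _ k ha1, fun j hj c hc d hd => ?_⟩
    rw [mul_smul_comm, smul_mul_assoc]
    exact Submodule.smul_mem _ _ (ha2 j hj c hc d hd)

/-!
Split off the largest power: with `n < 2^a`, `A(2^a + n) = (U(2^a) ⊕ V(2^a))·A(n)`, and by
induction `A(n) = V(2^{i_{d-1}})⋯V(2^{i_1}) + L(n)`. Both `U(2^a)·A(n)` and `V(2^a)·L(n)` lie in
`L(2^a + n)`: multiplied on the right by `A(2^a - n)` they land in `U(2^a)A(2^a)`, resp.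
`A(2^a)U(2^a)`, hence in `U(2^{a+1})` by condition (6). For the induction, `L(n)` is taken
relative to an arbitrary power `2^k ≥ n`; by (6) again these spaces only grow with `k`.
-/

lemma wordOf_append (l₁ l₂ : List (Fin 2)) :
    wordOf K (l₁ ++ l₂) = wordOf K l₁ * wordOf K l₂ := by
  simp [wordOf]

lemma Aspan_zero : Aspan K 0 = 1 := by
  rw [Aspan, Submodule.one_eq_span]
  congr 1
  ext a
  simp [IsWord, wordOf, List.length_eq_zero_iff]

lemma Aspan_add (a b : ℕ) : Aspan K (a + b) = Aspan K a * Aspan K b := by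
  rw [Aspan, Aspan, Aspan, Submodule.span_mul_span]
  congr 1
  ext z
  constructor
  · rintro ⟨l, hl, rfl⟩
    rw [← List.take_append_drop a l, wordOf_append]
    exact Set.mul_mem_mul ⟨_, by simp [hl], rfl⟩ ⟨_, by simp [hl], rfl⟩
  · rintro ⟨_, ⟨l₁, hl₁, rfl⟩, _, ⟨l₂, hl₂, rfl⟩, rfl⟩
    exact ⟨l₁ ++ l₂, by simp [hl₁, hl₂], (wordOf_append l₁ l₂).symm⟩

lemma sum_two_pow_lt {l : List ℕ} (hl : l.Pairwise (· < ·)) {k : ℕ} (hk : ∀ x ∈ l, x < k) :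
    (l.map (2 ^ ·)).sum < 2 ^ k := by
  rw [← List.sum_toFinset _ (hl.imp ne_of_lt)]
  exact Nat.geomSum_lt le_rfl (by simpa using hk)

namespace LSYSetup

variable (S : LSYSetup K)

/-- The paper's `L(n)`, relative to `2^k` in place of `2^{m+1}`. -/
def L (k n : ℕ) : Submodule K (FA K) :=
  Aspan K n ⊓ ⨅ b ∈ Aspan K (2 ^ k - n), (S.U k).comap (LinearMap.mulRight K b)

variable {S}

lemma mem_L {k n : ℕ} {a : FA K} :
    a ∈ S.L k n ↔ a ∈ Aspan K n ∧ ∀ b ∈ Aspan K (2 ^ k - n), a * b ∈ S.U k := by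
  simp [L]

lemma L_le_Aspan (k n : ℕ) : S.L k n ≤ Aspan K n := inf_le_left

lemma L_le_L_succ {k n : ℕ} (hn : n ≤ 2 ^ k) : S.L k n ≤ S.L (k + 1) n := by
  intro a ha
  obtain ⟨haA, haU⟩ := mem_L.1 ha
  refine mem_L.2 ⟨haA, fun c hc => ?_⟩
  rw [show 2 ^ (k + 1) - n = (2 ^ k - n) + 2 ^ k by rw [pow_succ]; omega, Aspan_add] at hc
  refine Submodule.mul_induction_on hc (fun b hb d hd => ?_) (fun _ _ h₁ h₂ => ?_)
  · rw [← mul_assoc]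
    exact S.hU_mul k (Submodule.mem_sup_right (Submodule.mul_mem_mul (haU b hb) hd))
  · rw [mul_add]
    exact add_mem h₁ h₂

lemma L_mono {k k' n : ℕ} (hn : n ≤ 2 ^ k) (hk : k ≤ k') : S.L k n ≤ S.L k' n := by
  induction k', hk using Nat.le_induction with
  | base => exact le_rfl
  | succ k' hk ih =>
    exact ih.trans (L_le_L_succ (hn.trans (Nat.pow_le_pow_right two_pos hk)))

lemma U_mul_Aspan_le {a n : ℕ} (hn : n ≤ 2 ^ a) :
    S.U a * Aspan K n ≤ S.L (a + 1) (2 ^ a + n) := by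
  refine Submodule.mul_le.2 fun x hx y hy => mem_L.2 ⟨?_, fun c hc => ?_⟩
  · rw [Aspan_add]
    exact Submodule.mul_mem_mul (S.hU_le a hx) hy
  · rw [show 2 ^ (a + 1) - (2 ^ a + n) = 2 ^ a - n by rw [pow_succ]; omega] at hc
    have hyc : y * c ∈ Aspan K (2 ^ a) := by
      rw [show 2 ^ a = n + (2 ^ a - n) by omega, Aspan_add]
      exact Submodule.mul_mem_mul hy hc
    rw [mul_assoc]
    exact S.hU_mul a (Submodule.mem_sup_right (Submodule.mul_mem_mul hx hyc))

lemma V_mul_L_le {a n : ℕ} (hn : n ≤ 2 ^ a) :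
    S.V a * S.L a n ≤ S.L (a + 1) (2 ^ a + n) := by
  refine Submodule.mul_le.2 fun x hx y hy => ?_
  obtain ⟨hyA, hyU⟩ := mem_L.1 hy
  refine mem_L.2 ⟨?_, fun c hc => ?_⟩
  · rw [Aspan_add]
    exact Submodule.mul_mem_mul (S.hV_le a hx) hyA
  · rw [show 2 ^ (a + 1) - (2 ^ a + n) = 2 ^ a - n by rw [pow_succ]; omega] at hc
    rw [mul_assoc]
    exact S.hU_mul a (Submodule.mem_sup_left (Submodule.mul_mem_mul (S.hV_le a hx) (hyU c hc)))

theorem prod_V_sup_L {l : List ℕ} (hl : l.Pairwise (· < ·)) {k : ℕ} (hk : ∀ x ∈ l, x < k) :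
    (l.reverse.map S.V).prod ⊔ S.L k (l.map (2 ^ ·)).sum = Aspan K (l.map (2 ^ ·)).sum := by
  induction l using List.reverseRecOn generalizing k with
  | nil =>
    simp only [List.reverse_nil, List.map_nil, List.prod_nil, List.sum_nil, Aspan_zero]
    exact sup_eq_left.2 ((L_le_Aspan k 0).trans Aspan_zero.le)
  | append_singleton l a ih =>
    obtain ⟨hl, -, hla⟩ := List.pairwise_append.1 hl
    have hla : ∀ x ∈ l, x < a := fun x hx => hla x hx a (List.mem_singleton_self a)
    set n := (l.map (2 ^ ·)).sum
    set P := (l.reverse.map S.V).prod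
    have hn : n ≤ 2 ^ a := (sum_two_pow_lt hl hla).le
    have ih : P ⊔ S.L a n = Aspan K n := ih hl hla
    have hLk : S.L (a + 1) (2 ^ a + n) ≤ S.L k (2 ^ a + n) :=
      L_mono (by rw [pow_succ]; omega) (hk a (by simp))
    have hsum : ((l ++ [a]).map (2 ^ ·)).sum = 2 ^ a + n := by simp [n, add_comm]
    have hprod : ((l ++ [a]).reverse.map S.V).prod = S.V a * P := by simp [P]
    rw [hsum, hprod]
    refine le_antisymm (sup_le ?_ (L_le_Aspan _ _)) ?_
    · rw [Aspan_add]
      exact mul_le_mul' (S.hV_le a) (le_sup_left.trans ih.le)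
    calc Aspan K (2 ^ a + n) = S.U a * Aspan K n ⊔ (S.V a * P ⊔ S.V a * S.L a n) := by
          rw [Aspan_add, ← S.h_sup, Submodule.sup_mul, ← Submodule.mul_sup, ih]
      _ ≤ S.V a * P ⊔ S.L k (2 ^ a + n) :=
          sup_le ((U_mul_Aspan_le hn).trans hLk |>.trans le_sup_right)
            (sup_le le_sup_left ((V_mul_L_le hn).trans hLk |>.trans le_sup_right))

lemma Lspace_eq_L (n m : ℕ) : Lspace S n m = S.L (m + 1) n := by
  ext
  exact mem_L.symm

end LSYSetup

theorem lemma_3_3_L_general (S : LSYSetup K) (n : ℕ)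
    (L : List ℕ) (hL : L.Pairwise (· < ·)) (hsum : (L.map (2 ^ ·)).sum = n)
    (m : ℕ) (hm₂ : n < 2 ^ (m + 1)) :
    (L.reverse.map S.V).prod ⊔ Lspace S n m = Aspan K n := by
  have hL_lt : ∀ x ∈ L, x < m + 1 := fun x hx =>
    (Nat.pow_lt_pow_iff_right one_lt_two).1
      ((List.le_sum_of_mem (List.mem_map_of_mem hx)).trans_lt (hsum ▸ hm₂))
  rw [S.Lspace_eq_L, ← hsum]
  exact S.prod_V_sup_L hL hL_lt

/-- **Lemma 3.3 (second part).** If `n ≥ 1` has binary expansion `2^{i₁} + ⋯ + 2^{i_d}`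
with `i₁ < ⋯ < i_d` and `2^m ≤ n < 2^{m+1}`, then
`V(2^{i_d})V(2^{i_{d-1}})⋯V(2^{i₁}) + L(n) = A(n)`. -/
theorem lemma_3_3_L (S : LSYSetup K) (n : ℕ) (hn : 1 ≤ n)
    (L : List ℕ) (hL : L.Pairwise (· < ·)) (hsum : (L.map (2 ^ ·)).sum = n)
    (m : ℕ) (hm₁ : 2 ^ m ≤ n) (hm₂ : n < 2 ^ (m + 1)) :
    (L.reverse.map S.V).prod ⊔ Lspace S n m = Aspan K n :=
  lemma_3_3_L_general S n L hL hsum m hm₂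

end
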